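/- arXiv:2601.13410 — 2 statements merged into one kernel-verified Lean document; each statement's English description precedes it below -/
import Mathlib

section
/- Let Ω be a bounded polytope in R^d defined by hyperplanes (w_i, c_i), i ∈ [m], let p ∈ int(Ω), and r ≥ 0. The forward Funk ball B_F(p,r) = { q ∈ Ω : d_F(p,q) ≤ r } equals the intersection over i ∈ [m] of the half-spaces { q : w_i^T q + c_i − e^{−r}(w_i^T p + c_i) ≥ 0 }. In particular, B_F(p,r) is a convex polytope bounded by at most m hyperplanes, each parallel to a facet hyperplane of Ω. -/
open Matrix

lemma Real.log_div_le_iff_exp_neg_mul_le {a b r : ℝ} (ha : 0 < a) (hb : 0 < b) :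
    Real.log (a / b) ≤ r ↔ Real.exp (-r) * a ≤ b := by
  rw [Real.log_le_iff_le_exp (div_pos ha hb), div_le_iff₀ hb, Real.exp_neg,
    inv_mul_le_iff₀ (Real.exp_pos r), mul_comm]

theorem funk_ball_polytope_general {d m : ℕ} (hm : 0 < m)
    (w : Fin m → Fin d → ℝ) (c : Fin m → ℝ)
    (Ω : Set (Fin d → ℝ))
    (hint : interior Ω = {x | ∀ i, 0 < w i ⬝ᵥ x + c i})
    (p : Fin d → ℝ) (hp : p ∈ interior Ω) (r : ℝ) :
    {q ∈ interior Ω |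
        Finset.univ.sup' (Finset.univ_nonempty_iff.mpr ⟨⟨0, hm⟩⟩)
          (fun i => Real.log ((w i ⬝ᵥ p + c i) / (w i ⬝ᵥ q + c i))) ≤ r} =
      ⋂ i : Fin m, {q | 0 ≤ w i ⬝ᵥ q + c i - Real.exp (-r) * (w i ⬝ᵥ p + c i)} := by
  rw [hint] at hp ⊢
  ext q
  simp only [Set.mem_ofPred_eq, Set.mem_iInter, Finset.sup'_le_iff,
    Finset.mem_univ, forall_true_left, sub_nonneg]
  constructor
  · rintro ⟨hq, hball⟩ i
    exact (Real.log_div_le_iff_exp_neg_mul_le (hp i) (hq i)).1 (hball i)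
  · intro hhalf
    have hq : ∀ i, 0 < w i ⬝ᵥ q + c i := fun i =>
      (mul_pos (Real.exp_pos _) (hp i)).trans_le (hhalf i)
    exact ⟨hq, fun i => (Real.log_div_le_iff_exp_neg_mul_le (hp i) (hq i)).2 (hhalf i)⟩

/-- Funk balls are polytopes: for a bounded polytope
`Ω = ⋂ᵢ {x : wᵢ ⬝ x + cᵢ ≥ 0}`, `p ∈ int Ω` and `r ≥ 0`, the Funk ball
`B_F(p,r) = { q : d_F(p,q) ≤ r }` (with `d_F` by Birkhoff's formula, and boundary points of
`Ω` at infinite Funk distance) equals the intersection of the `m` half-spaces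
`{ q : wᵢ ⬝ q + cᵢ − e^{−r}(wᵢ ⬝ p + cᵢ) ≥ 0 }`, each parallel to a facet hyperplane of `Ω`. -/
theorem funk_ball_polytope {d m : ℕ} (hm : 0 < m)
    (w : Fin m → Fin d → ℝ) (c : Fin m → ℝ)
    (Ω : Set (Fin d → ℝ)) (hΩ : Ω = {x | ∀ i, 0 ≤ w i ⬝ᵥ x + c i})
    (hbdd : Bornology.IsBounded Ω)
    (hint : interior Ω = {x | ∀ i, 0 < w i ⬝ᵥ x + c i})
    (p : Fin d → ℝ) (hp : p ∈ interior Ω) (r : ℝ) (hr : 0 ≤ r) :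
    {q ∈ interior Ω |
        Finset.univ.sup' (Finset.univ_nonempty_iff.mpr ⟨⟨0, hm⟩⟩)
          (fun i => Real.log ((w i ⬝ᵥ p + c i) / (w i ⬝ᵥ q + c i))) ≤ r} =
      ⋂ i : Fin m, {q | 0 ≤ w i ⬝ᵥ q + c i - Real.exp (-r) * (w i ⬝ᵥ p + c i)} :=
  funk_ball_polytope_general hm w c Ω hint p hp r
end

section
/- Let Ω be a bounded polytope in R^d defined by hyperplanes (w_i, c_i), i ∈ [m], let p ∈ int(Ω) and r ≥ 0. The Hilbert ball B_H(p,r) = { q ∈ Ω : d_H(p,q) ≤ r } equals the intersection over ordered pairs (j,k) ∈ [m]×[m] of the half-spaces { q : (α_{j,k} w_j − α'_{j,k} w_k)^T q + (α_{j,k} c_j − α'_{j,k} c_k) ≥ 0 }, where α_{j,k} = e^{2r}(w_k^T p + c_k) and α'_{j,k} = w_j^T p + c_j. In particular, B_H(p,r) is a convex polytope bounded by at most m(m−1) hyperplanes. -/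
/-!
Write `a i = wᵢ ⬝ p + cᵢ` and `b i = wᵢ ⬝ q + cᵢ` for the slacks at `p` and `q`. When all of them
are positive, exponentiating and clearing denominators turns the term `(j, k)` of the maximum
being at most `2r` into `a j * b k ≤ e^{2r} a k * b j`, an inequality that is affine in `q`: it is
the `(j, k)` half-space. Conversely a point of `Ω` meeting all these inequalities lies in the
interior: some slack `b k` is positive, and the `(j, k)` inequality then forces `b j > 0` for all `j`.
-/

open Matrix

theorem dotProduct_mul_sub_mul_add {R n : Type*} [CommRing R] [Fintype n]
    (α β : R) (u v x : n → R) (a b : R) :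
    (fun t => α * u t - β * v t) ⬝ᵥ x + (α * a - β * b) =
      α * (u ⬝ᵥ x + a) - β * (v ⬝ᵥ x + b) := by
  simp only [dotProduct, sub_mul, mul_assoc, Finset.sum_sub_distrib, ← Finset.mul_sum]
  ring

theorem log_cross_ratio_le_iff {a b a' b' : ℝ} (ha : 0 < a) (hb : 0 < b) (ha' : 0 < a')
    (hb' : 0 < b') (s : ℝ) :
    Real.log ((a / b) * (b' / a')) ≤ s ↔ a * b' ≤ Real.exp s * a' * b := by
  rw [Real.log_le_iff_le_exp (by positivity), div_mul_div_comm, div_le_iff₀ (by positivity)]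
  ring_nf

theorem half_sup'_log_cross_ratio_le_iff {ι : Type*} [Fintype ι]
    (hne : (Finset.univ : Finset (ι × ι)).Nonempty) {a b : ι → ℝ}
    (ha : ∀ i, 0 < a i) (hb : ∀ i, 0 < b i) (r : ℝ) :
    1 / 2 * Finset.univ.sup' hne
        (fun jk : ι × ι => Real.log ((a jk.1 / b jk.1) * (b jk.2 / a jk.2))) ≤ r ↔
      ∀ j k, a j * b k ≤ Real.exp (2 * r) * a k * b j := by
  have hhalf : ∀ S : ℝ, 1 / 2 * S ≤ r ↔ S ≤ 2 * r := fun S => by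
    constructor <;> intro <;> linarith
  simp only [hhalf, Finset.sup'_le_iff, Finset.mem_univ, true_implies, Prod.forall]
  exact forall₂_congr fun j k => log_cross_ratio_le_iff (ha j) (hb j) (ha k) (hb k) _

theorem pos_of_forall_mul_le_mul {ι : Type*} {a b : ι → ℝ} (ha : ∀ i, 0 < a i) {k : ι}
    (hk : 0 < b k) {E : ℝ} (hE : 0 ≤ E) (h : ∀ j, a j * b k ≤ E * a k * b j) (j : ι) :
    0 < b j := by
  by_contra! hbj
  have : E * a k * b j ≤ 0 := mul_nonpos_of_nonneg_of_nonpos (mul_nonneg hE (ha k).le) hbj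
  linarith [h j, mul_pos (ha j) hk]

theorem hilbert_ball_polytope_general {d m : ℕ} (hm : 0 < m)
    (w : Fin m → Fin d → ℝ) (c : Fin m → ℝ)
    (Ω : Set (Fin d → ℝ))
    (hint : interior Ω = {x | ∀ i, 0 < w i ⬝ᵥ x + c i})
    (hnondeg : ∀ x ∈ Ω, ∃ i, 0 < w i ⬝ᵥ x + c i)
    (p : Fin d → ℝ) (hp : p ∈ interior Ω) (r : ℝ) :
    {q ∈ interior Ω |
        (1 / 2) * Finset.univ.sup' (Finset.univ_nonempty_iff.mpr ⟨(⟨0, hm⟩, ⟨0, hm⟩)⟩)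
          (fun jk : Fin m × Fin m =>
            Real.log (((w jk.1 ⬝ᵥ p + c jk.1) / (w jk.1 ⬝ᵥ q + c jk.1)) *
              ((w jk.2 ⬝ᵥ q + c jk.2) / (w jk.2 ⬝ᵥ p + c jk.2)))) ≤ r} =
      ⋂ j : Fin m, ⋂ k : Fin m,
        {q ∈ Ω | 0 ≤
          (fun t => (Real.exp (2 * r) * (w k ⬝ᵥ p + c k)) * w j t -
              (w j ⬝ᵥ p + c j) * w k t) ⬝ᵥ q +
            ((Real.exp (2 * r) * (w k ⬝ᵥ p + c k)) * c j - (w j ⬝ᵥ p + c j) * c k)} := by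
  have hp_pos : ∀ i, 0 < w i ⬝ᵥ p + c i := by rwa [hint] at hp
  ext q
  simp only [Set.mem_iInter, Set.mem_ofPred_eq, dotProduct_mul_sub_mul_add, sub_nonneg]
  constructor
  · rintro ⟨hq, hball⟩
    have hq_pos : ∀ i, 0 < w i ⬝ᵥ q + c i := by rwa [hint] at hq
    have hcross := (half_sup'_log_cross_ratio_le_iff _ hp_pos hq_pos r).mp hball
    exact fun j k => ⟨interior_subset hq, hcross j k⟩
  · intro h
    obtain ⟨k, hk⟩ := hnondeg q (h ⟨0, hm⟩ ⟨0, hm⟩).1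
    have hq_pos : ∀ i, 0 < w i ⬝ᵥ q + c i :=
      pos_of_forall_mul_le_mul hp_pos hk (Real.exp_pos _).le fun j => (h j k).2
    exact ⟨by rwa [hint], (half_sup'_log_cross_ratio_le_iff _ hp_pos hq_pos r).mpr
      fun j k => (h j k).2⟩

/-- Hilbert balls are polytopes: for a bounded polytope
`Ω = ⋂ᵢ {x : wᵢ ⬝ x + cᵢ ≥ 0}`, `p ∈ int Ω`, `r ≥ 0`, the Hilbert ball
`B_H(p,r) = { q : d_H(p,q) ≤ r }` (with `d_H` via Birkhoff's formulation) equals the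
intersection over ordered pairs `(j,k)` of the half-spaces
`{ q ∈ Ω : (α_{j,k} w_j − α'_{j,k} w_k) ⬝ q + (α_{j,k} c_j − α'_{j,k} c_k) ≥ 0 }`, where
`α_{j,k} = e^{2r}(w_k ⬝ p + c_k)` and `α'_{j,k} = w_j ⬝ p + c_j`; in particular it is a
convex polytope bounded by at most `m(m−1)` hyperplanes. -/
theorem hilbert_ball_polytope {d m : ℕ} (hm : 0 < m)
    (w : Fin m → Fin d → ℝ) (c : Fin m → ℝ)
    (Ω : Set (Fin d → ℝ)) (hΩ : Ω = {x | ∀ i, 0 ≤ w i ⬝ᵥ x + c i})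
    (hbdd : Bornology.IsBounded Ω)
    (hint : interior Ω = {x | ∀ i, 0 < w i ⬝ᵥ x + c i})
    (hnondeg : ∀ x ∈ Ω, ∃ i, 0 < w i ⬝ᵥ x + c i)
    (p : Fin d → ℝ) (hp : p ∈ interior Ω) (r : ℝ) (hr : 0 ≤ r) :
    {q ∈ interior Ω |
        (1 / 2) * Finset.univ.sup' (Finset.univ_nonempty_iff.mpr ⟨(⟨0, hm⟩, ⟨0, hm⟩)⟩)
          (fun jk : Fin m × Fin m =>
            Real.log (((w jk.1 ⬝ᵥ p + c jk.1) / (w jk.1 ⬝ᵥ q + c jk.1)) *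
              ((w jk.2 ⬝ᵥ q + c jk.2) / (w jk.2 ⬝ᵥ p + c jk.2)))) ≤ r} =
      ⋂ j : Fin m, ⋂ k : Fin m,
        {q ∈ Ω | 0 ≤
          (fun t => (Real.exp (2 * r) * (w k ⬝ᵥ p + c k)) * w j t -
              (w j ⬝ᵥ p + c j) * w k t) ⬝ᵥ q +
            ((Real.exp (2 * r) * (w k ⬝ᵥ p + c k)) * c j - (w j ⬝ᵥ p + c j) * c k)} :=
  hilbert_ball_polytope_general hm w c Ω hint hnondeg p hp r
end
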